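/- arXiv:1512.04403 — 2 statements merged into one kernel-verified Lean document; each statement's English description precedes it below -/
import Mathlib

section
/- Assume the project is PCL-indexable, i.e., conditions (PCLI1), (PCLI2) and (PCLI3) hold, and let p be an initial distribution with full support ℝ and ∫ w dp < ∞. Then for every z₀ ∈ ℝ: m*(z₀) = lim_{z → z₀, z ≠ z₀} (F(p,z) − F(p,z₀))/(G(p,z) − G(p,z₀)) = lim_{z → z₀, z ≠ z₀} (F(p,z) − F(p,z₀⁻))/(G(p,z) − G(p,z₀⁻)), where F(p,z₀⁻) and G(p,z₀⁻) denote the left limits of z ↦ F(p,z) and z ↦ G(p,z) at z₀ (the denominators are nonzero since z ↦ G(p,z) is strictly decreasing). -/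
open MeasureTheory ProbabilityTheory Filter Topology Set

noncomputable section

/-- A restless bandit project: the model data (discount factor `β`, passive/active
Markov transition kernels `κ false`/`κ true`, reward `r` and resource consumption `c`),
Assumption 1 (the weighted sup-norm conditions for weight `w` and constants `M`, `γ`),
together with the threshold-policy performance metrics `F`, `G` (for `z`-policies,
active iff `x > z`), `Fm`, `Gm` (for `z⁻`-policies, active iff `x ≥ z`), and the
optimal value function `V lam` of the `lam`-price problem, each of which is the
(unique) `w`-bounded measurable solution of its fixed-point equation. -/
structure Bandit where
  β : ℝ
  κ : Bool → Kernel ℝ ℝ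
  r : ℝ → Bool → ℝ
  c : ℝ → Bool → ℝ
  w : ℝ → ℝ
  M : ℝ
  γ : ℝ
  F : ℝ → EReal → ℝ
  G : ℝ → EReal → ℝ
  Fm : ℝ → EReal → ℝ
  Gm : ℝ → EReal → ℝ
  V : ℝ → ℝ → ℝ
  hβ0 : 0 ≤ β
  hβ1 : β < 1
  hκ : ∀ a, IsMarkovKernel (κ a)
  hr_cont : ∀ a, Continuous fun x => r x a
  hc_cont : ∀ a, Continuous fun x => c x a
  hc0 : ∀ x, 0 ≤ c x false
  hc01 : ∀ x, c x false < c x true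
  hw_meas : Measurable w
  hw_one : ∀ x, 1 ≤ w x
  hM : 0 < M
  hβγ : β ≤ γ
  hγ1 : γ < 1
  hr_bd : ∀ x a, |r x a| ≤ M * w x
  hc_bd : ∀ x a, c x a ≤ M * w x
  hw_int : ∀ a x, Integrable w (κ a x)
  hw_drift : ∀ a x, β * ∫ y, w y ∂(κ a x) ≤ γ * w x
  hF_meas : ∀ z, Measurable fun x => F x z
  hG_meas : ∀ z, Measurable fun x => G x z
  hFm_meas : ∀ z, Measurable fun x => Fm x z
  hGm_meas : ∀ z, Measurable fun x => Gm x z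
  hV_meas : ∀ lam, Measurable (V lam)
  hF_bdd : ∀ z, ∃ C, ∀ x, |F x z| ≤ C * w x
  hG_bdd : ∀ z, ∃ C, ∀ x, |G x z| ≤ C * w x
  hFm_bdd : ∀ z, ∃ C, ∀ x, |Fm x z| ≤ C * w x
  hGm_bdd : ∀ z, ∃ C, ∀ x, |Gm x z| ≤ C * w x
  hV_bdd : ∀ lam, ∃ C, ∀ x, |V lam x| ≤ C * w x
  hF_eq : ∀ x z, F x z =
    r x (decide (z < (x : EReal))) +
      β * ∫ y, F y z ∂(κ (decide (z < (x : EReal))) x)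
  hG_eq : ∀ x z, G x z =
    c x (decide (z < (x : EReal))) +
      β * ∫ y, G y z ∂(κ (decide (z < (x : EReal))) x)
  hFm_eq : ∀ x z, Fm x z =
    r x (decide (z ≤ (x : EReal))) +
      β * ∫ y, Fm y z ∂(κ (decide (z ≤ (x : EReal))) x)
  hGm_eq : ∀ x z, Gm x z =
    c x (decide (z ≤ (x : EReal))) +
      β * ∫ y, Gm y z ∂(κ (decide (z ≤ (x : EReal))) x)
  hV_eq : ∀ lam x, V lam x =
    max (r x false - lam * c x false + β * ∫ y, V lam y ∂(κ false x))
        (r x true - lam * c x true + β * ∫ y, V lam y ∂(κ true x))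

/-- `ν` is the Lebesgue–Stieltjes measure of the (bounded nonincreasing
right-continuous) function `h`: `ν(z₁,z₂] = h z₁ - h z₂`. -/
def IsLSMeasureOfAnti (h : ℝ → ℝ) (ν : Measure ℝ) : Prop :=
  ∀ z₁ z₂ : ℝ, z₁ ≤ z₂ → ν (Set.Ioc z₁ z₂) = ENNReal.ofReal (h z₁ - h z₂)

/-- `ν` is the Lebesgue–Stieltjes measure of the (bounded nondecreasing
right-continuous) function `h`: `ν(z₁,z₂] = h z₂ - h z₁`. -/
def IsLSMeasureOfMono (h : ℝ → ℝ) (ν : Measure ℝ) : Prop :=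
  ∀ z₁ z₂ : ℝ, z₁ ≤ z₂ → ν (Set.Ioc z₁ z₂) = ENNReal.ofReal (h z₂ - h z₁)

/-- The real interval `(z₁, z₂] ⊆ ℝ` with extended-real endpoints. -/
def iocR (z₁ z₂ : EReal) : Set ℝ := {y : ℝ | z₁ < (y : EReal) ∧ (y : EReal) ≤ z₂}

/-- `t`-step distribution of the Markov chain with kernel `κ` and initial law `p`. -/
def kerIter (κ : Kernel ℝ ℝ) : ℕ → Measure ℝ → Measure ℝ
  | 0, p => p
  | (t + 1), p => (kerIter κ t p).bind fun x => κ x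

namespace Bandit

variable (P : Bandit)

/-- Marginal reward metric `f(x,z)` of the `z`-policy. -/
def f (x : ℝ) (z : EReal) : ℝ :=
  (P.r x true - P.r x false) +
    P.β * ((∫ y, P.F y z ∂(P.κ true x)) - ∫ y, P.F y z ∂(P.κ false x))

/-- Marginal resource metric `g(x,z)` of the `z`-policy. -/
def g (x : ℝ) (z : EReal) : ℝ :=
  (P.c x true - P.c x false) +
    P.β * ((∫ y, P.G y z ∂(P.κ true x)) - ∫ y, P.G y z ∂(P.κ false x))

/-- Marginal reward metric `f(x,z⁻)` of the `z⁻`-policy. -/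
def fm (x : ℝ) (z : EReal) : ℝ :=
  (P.r x true - P.r x false) +
    P.β * ((∫ y, P.Fm y z ∂(P.κ true x)) - ∫ y, P.Fm y z ∂(P.κ false x))

/-- Marginal resource metric `g(x,z⁻)` of the `z⁻`-policy. -/
def gm (x : ℝ) (z : EReal) : ℝ :=
  (P.c x true - P.c x false) +
    P.β * ((∫ y, P.Gm y z ∂(P.κ true x)) - ∫ y, P.Gm y z ∂(P.κ false x))

/-- Marginal productivity metric `m(x,z) = f(x,z)/g(x,z)`. -/
def m (x : ℝ) (z : EReal) : ℝ := P.f x z / P.g x z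

/-- Marginal productivity metric `m(x,z⁻) = f(x,z⁻)/g(x,z⁻)`. -/
def mm (x : ℝ) (z : EReal) : ℝ := P.fm x z / P.gm x z

/-- The marginal productivity (MP) index `m*(x) = m(x,x)`. -/
def mStar (x : ℝ) : ℝ := P.m x (x : EReal)

/-- The active action is `P_lam`-optimal at `x`. -/
def ActOpt (lam x : ℝ) : Prop :=
  P.r x false - lam * P.c x false + P.β * ∫ y, P.V lam y ∂(P.κ false x) ≤
    P.r x true - lam * P.c x true + P.β * ∫ y, P.V lam y ∂(P.κ true x)

/-- The passive action is `P_lam`-optimal at `x`. -/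
def PassOpt (lam x : ℝ) : Prop :=
  P.r x true - lam * P.c x true + P.β * ∫ y, P.V lam y ∂(P.κ true x) ≤
    P.r x false - lam * P.c x false + P.β * ∫ y, P.V lam y ∂(P.κ false x)

/-- The project is indexable with index `ν`. -/
def Indexable (ν : ℝ → ℝ) : Prop :=
  ∀ lam x, (P.ActOpt lam x ↔ lam ≤ ν x) ∧ (P.PassOpt lam x ↔ ν x ≤ lam)

/-- The `z`-policy is `P_lam`-optimal. -/
def ZPolicyOpt (z : EReal) (lam : ℝ) : Prop :=
  ∀ x, P.F x z - lam * P.G x z = P.V lam x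

/-- The `z⁻`-policy is `P_lam`-optimal. -/
def ZmPolicyOpt (z : EReal) (lam : ℝ) : Prop :=
  ∀ x, P.Fm x z - lam * P.Gm x z = P.V lam x

/-- The project is strongly threshold-indexable with index `ν`. -/
def StronglyThresholdIndexable (ν : ℝ → ℝ) : Prop :=
  P.Indexable ν ∧
    ∀ lam : ℝ, ∃ z : EReal, P.ZPolicyOpt z lam ∧ P.ZmPolicyOpt z lam

/-- PCL-indexability condition (PCLI1). -/
def PCLI1 : Prop := ∀ (x : ℝ) (z : EReal), 0 < P.g x z

/-- PCL-indexability condition (PCLI2). -/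
def PCLI2 : Prop :=
  Monotone P.mStar ∧ Continuous P.mStar ∧ BddBelow (Set.range P.mStar)

/-- PCL-indexability condition (PCLI3). -/
def PCLI3 : Prop :=
  ∀ x : ℝ, ∀ ν : Measure ℝ, IsLSMeasureOfAnti (fun z : ℝ => P.G x z) ν →
    ∀ z₁ z₂ : ℝ, z₁ < z₂ →
      P.F x z₂ - P.F x z₁ = -∫ z in Set.Ioc z₁ z₂, P.mStar z ∂ν

/-- The project is PCL-indexable. -/
def PCLIndexable : Prop := P.PCLI1 ∧ P.PCLI2 ∧ P.PCLI3

/-- Reward metric with initial distribution `p`. -/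
def Fp (p : Measure ℝ) (z : EReal) : ℝ := ∫ x, P.F x z ∂p

/-- Resource metric with initial distribution `p`. -/
def Gp (p : Measure ℝ) (z : EReal) : ℝ := ∫ x, P.G x z ∂p

/-- `z⁻`-policy reward metric with initial distribution `p`. -/
def Fmp (p : Measure ℝ) (z : EReal) : ℝ := ∫ x, P.Fm x z ∂p

/-- `z⁻`-policy resource metric with initial distribution `p`. -/
def Gmp (p : Measure ℝ) (z : EReal) : ℝ := ∫ x, P.Gm x z ∂p

/-- An admissible initial distribution: a probability measure with `∫ w dp < ∞`. -/
def IsInitDist (p : Measure ℝ) : Prop :=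
  IsProbabilityMeasure p ∧ Integrable P.w p

/-- The transition kernel of the `z`-policy (active iff `x > z`). -/
def thrKer (z : EReal) : Kernel ℝ ℝ :=
  haveI : DecidablePred (· ∈ {x : ℝ | z < (x : EReal)}) := Classical.decPred _
  Kernel.piecewise
    (show MeasurableSet {x : ℝ | z < (x : EReal)} from
      measurable_coe_real_ereal measurableSet_Ioi)
    (P.κ true) (P.κ false)

/-- The transition kernel of the `z⁻`-policy (active iff `x ≥ z`). -/
def thrKerM (z : EReal) : Kernel ℝ ℝ :=
  haveI : DecidablePred (· ∈ {x : ℝ | z ≤ (x : EReal)}) := Classical.decPred _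
  Kernel.piecewise
    (show MeasurableSet {x : ℝ | z ≤ (x : EReal)} from
      measurable_coe_real_ereal measurableSet_Ici)
    (P.κ true) (P.κ false)

/-- The (discounted) state occupation measure `μ_p^z` of the `z`-policy. -/
def occ (z : EReal) (p : Measure ℝ) : Measure ℝ :=
  Measure.sum fun t : ℕ => ENNReal.ofReal (P.β ^ t) • kerIter (P.thrKer z) t p

/-- The (discounted) state occupation measure `μ_p^{z⁻}` of the `z⁻`-policy. -/
def occM (z : EReal) (p : Measure ℝ) : Measure ℝ :=
  Measure.sum fun t : ℕ => ENNReal.ofReal (P.β ^ t) • kerIter (P.thrKerM z) t p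

end Bandit

/-- Finite-horizon reward metric `F_k(x,z)` (value iteration). -/
def Bandit.Fk (P : Bandit) : ℕ → ℝ → EReal → ℝ
  | 0, x, z => P.r x (decide (z < (x : EReal)))
  | (k + 1), x, z =>
      P.r x (decide (z < (x : EReal))) +
        P.β * ∫ y, Bandit.Fk P k y z ∂(P.κ (decide (z < (x : EReal))) x)

/-- Finite-horizon resource metric `G_k(x,z)` (value iteration). -/
def Bandit.Gk (P : Bandit) : ℕ → ℝ → EReal → ℝ
  | 0, x, z => P.c x (decide (z < (x : EReal)))
  | (k + 1), x, z =>
      P.c x (decide (z < (x : EReal))) +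
        P.β * ∫ y, Bandit.Gk P k y z ∂(P.κ (decide (z < (x : EReal))) x)

/-- Finite-horizon marginal reward metric `f_k(x,z)`. -/
def Bandit.fk (P : Bandit) : ℕ → ℝ → EReal → ℝ
  | 0, x, _ => P.r x true - P.r x false
  | (k + 1), x, z =>
      (P.r x true - P.r x false) +
        P.β * ((∫ y, P.Fk k y z ∂(P.κ true x)) - ∫ y, P.Fk k y z ∂(P.κ false x))

/-- Finite-horizon marginal resource metric `g_k(x,z)`. -/
def Bandit.gk (P : Bandit) : ℕ → ℝ → EReal → ℝ
  | 0, x, _ => P.c x true - P.c x false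
  | (k + 1), x, z =>
      (P.c x true - P.c x false) +
        P.β * ((∫ y, P.Gk k y z ∂(P.κ true x)) - ∫ y, P.Gk k y z ∂(P.κ false x))

namespace Bandit

variable (P : Bandit)

/-- Finite-horizon MP metric `m_k(x,z)`. -/
def mk' (k : ℕ) (x : ℝ) (z : EReal) : ℝ := P.fk k x z / P.gk k x z

/-- Finite-horizon MP index `m*_k(x)`. -/
def mkStar (k : ℕ) (x : ℝ) : ℝ := P.mk' k x (x : EReal)

/-- `g̲(x,z) = inf_k g_k(x,z)`. -/
def gbar (x : ℝ) (z : EReal) : ℝ := ⨅ k : ℕ, P.gk k x z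

end Bandit

/-!
PCLI3, applied to the Lebesgue–Stieltjes measure of the nonincreasing right-continuous function
`G(x,·)`, traps `F(x,z₁) - F(x,z₂)` between `m*(z₁)` and `m*(z₂)` times `G(x,z₁) - G(x,z₂)`.
As `z₂ ↑ z₀` the metrics converge to those of the `z₀⁻`-policy, which gives the same bounds
for `F(x,z₀⁻)`, `G(x,z₀⁻)`; and since the `z₀`- and `z₀⁻`-policies differ only at `z₀`,
`F(x,z₀⁻) - F(x,z₀) = m*(z₀) (G(x,z₀⁻) - G(x,z₀))`.
Integrating against `p`, whose full support makes `G(p,·)` strictly decreasing, puts both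
difference quotients between `m*(z)` and `m*(z₀)`, and continuity of `m*` finishes.

Monotonicity, right continuity and the left limits of the metrics all come from one maximum
principle: a `w`-bounded `u` with `u ≤ β ∫ u dκ` is `≤ 0`, since iterating gives `u ≤ C γⁿ w`.
-/

theorem eventually_indicator_Ioi_eq (z y : ℝ) :
    ∀ᶠ t in 𝓝[>] z, ∀ φ : ℝ → ℝ, (Ioi t).indicator φ y = (Ioi z).indicator φ y := by
  by_cases hy : z < y
  · filter_upwards [Ioo_mem_nhdsGT hy] with t ht φ
    rw [indicator_of_mem (mem_Ioi.2 ht.2), indicator_of_mem (mem_Ioi.2 hy)]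
  · filter_upwards [self_mem_nhdsWithin] with t (ht : z < t) φ
    rw [indicator_of_notMem fun h => hy (ht.trans (mem_Ioi.1 h)),
      indicator_of_notMem (mt mem_Ioi.1 hy)]

theorem eventually_indicator_Ioi_eq_Ici (z₀ y : ℝ) :
    ∀ᶠ t in 𝓝[<] z₀, ∀ φ : ℝ → ℝ, (Ioi t).indicator φ y = (Ici z₀).indicator φ y := by
  by_cases hy : z₀ ≤ y
  · filter_upwards [self_mem_nhdsWithin] with t (ht : t < z₀) φ
    rw [indicator_of_mem (mem_Ioi.2 (ht.trans_le hy)), indicator_of_mem (mem_Ici.2 hy)]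
  · filter_upwards [Ioo_mem_nhdsLT (not_le.mp hy)] with t ht φ
    rw [indicator_of_notMem fun h => lt_asymm ht.1 (mem_Ioi.1 h),
      indicator_of_notMem (mt mem_Ici.1 hy)]

theorem IsLSMeasureOfAnti.mul_le_setIntegral_Ioc {h : ℝ → ℝ} {ν : Measure ℝ}
    (hν : IsLSMeasureOfAnti h ν) {m : ℝ → ℝ} (hm : Monotone m) {z₁ z₂ : ℝ} (hz : z₁ ≤ z₂)
    (hh : h z₂ ≤ h z₁) :
    m z₁ * (h z₁ - h z₂) ≤ ∫ z in Ioc z₁ z₂, m z ∂ν ∧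
      ∫ z in Ioc z₁ z₂, m z ∂ν ≤ m z₂ * (h z₁ - h z₂) := by
  have hfin : ν (Ioc z₁ z₂) ≠ ⊤ := by rw [hν z₁ z₂ hz]; exact ENNReal.ofReal_ne_top
  have hreal : ν.real (Ioc z₁ z₂) = h z₁ - h z₂ := by
    rw [measureReal_def, hν z₁ z₂ hz, ENNReal.toReal_ofReal (sub_nonneg.mpr hh)]
  have hint : IntegrableOn m (Ioc z₁ z₂) ν := by
    refine Measure.integrableOn_of_bounded (M := max |m z₁| |m z₂|) hfin
      hm.measurable.aestronglyMeasurable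
      ((ae_restrict_iff' measurableSet_Ioc).mpr (ae_of_all _ fun z hz' => ?_))
    rw [Real.norm_eq_abs, abs_le]
    constructor
    · linarith [neg_abs_le (m z₁), le_max_left |m z₁| |m z₂|, hm hz'.1.le]
    · linarith [le_abs_self (m z₂), le_max_right |m z₁| |m z₂|, hm hz'.2]
  have hconst : ∀ c : ℝ, ∫ _ in Ioc z₁ z₂, c ∂ν = c * (h z₁ - h z₂) := fun c => by
    rw [setIntegral_const, hreal, smul_eq_mul, mul_comm]
  rw [← hconst, ← hconst]
  exact ⟨setIntegral_mono_on (integrableOn_const hfin) hint measurableSet_Ioc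
      fun z hz' => hm hz'.1.le,
    setIntegral_mono_on hint (integrableOn_const hfin) measurableSet_Ioc fun z hz' => hm hz'.2⟩

theorem integral_pos_of_indicator_Ioo_le {p : Measure ℝ}
    (hsupp : ∀ s : Set ℝ, IsOpen s → s.Nonempty → 0 < p s) {φ D : ℝ → ℝ} (hφ : Measurable φ)
    (hpos : ∀ x, 0 < φ x) (hD : Integrable D p) {a b : ℝ} (hab : a < b)
    (hle : ∀ x, (Ioo a b).indicator φ x ≤ D x) : 0 < ∫ x, D x ∂p := by
  have hnonneg : ∀ x, 0 ≤ (Ioo a b).indicator φ x := indicator_nonneg fun x _ => (hpos x).le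
  have hint : Integrable ((Ioo a b).indicator φ) p :=
    hD.mono' (hφ.indicator measurableSet_Ioo).aestronglyMeasurable
      (ae_of_all _ fun x => (Real.norm_of_nonneg (hnonneg x)).trans_le (hle x))
  have hIoo : 0 < ∫ x in Ioo a b, φ x ∂p := by
    rw [setIntegral_pos_iff_support_of_nonneg_ae (ae_of_all _ fun x => (hpos x).le)
      ((integrable_indicator_iff measurableSet_Ioo).mp hint)]
    calc 0 < p (Ioo a b) := hsupp _ isOpen_Ioo (nonempty_Ioo.mpr hab)
      _ ≤ p (Function.support φ ∩ Ioo a b) := measure_mono fun x hx => ⟨(hpos x).ne', hx⟩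
  calc 0 < ∫ x in Ioo a b, φ x ∂p := hIoo
    _ = ∫ x, (Ioo a b).indicator φ x ∂p := (integral_indicator measurableSet_Ioo).symm
    _ ≤ ∫ x, D x ∂p := integral_mono hint hD hle

theorem div_mem_Icc_of_mul_le {a b N D : ℝ} (hD : 0 < D) (h : a * D ≤ N ∧ N ≤ b * D) :
    N / D ∈ Icc a b :=
  ⟨(le_div_iff₀ hD).mpr h.1, (div_le_iff₀ hD).mpr h.2⟩

theorem tendsto_nhdsNE_of_mem_uIcc {φ m : ℝ → ℝ} {z₀ : ℝ} (hm : ContinuousAt m z₀)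
    (h : ∀ z, z ≠ z₀ → φ z ∈ uIcc (m z) (m z₀)) : Tendsto φ (𝓝[≠] z₀) (𝓝 (m z₀)) := by
  have hlim : Tendsto m (𝓝[≠] z₀) (𝓝 (m z₀)) := hm.tendsto.mono_left nhdsWithin_le_nhds
  refine tendsto_of_tendsto_of_tendsto_of_le_of_le'
    (by simpa using hlim.min (tendsto_const_nhds (x := m z₀)))
    (by simpa using hlim.max (tendsto_const_nhds (x := m z₀))) ?_ ?_
  · filter_upwards [self_mem_nhdsWithin] with z hz using (h z hz).1
  · filter_upwards [self_mem_nhdsWithin] with z hz using (h z hz).2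

namespace Bandit

def MeasurableWBounded (P : Bandit) (Φ : ℝ → ℝ) : Prop :=
  Measurable Φ ∧ ∃ C, ∀ x, |Φ x| ≤ C * P.w x

namespace MeasurableWBounded

variable {P : Bandit} {Φ Ψ : ℝ → ℝ}

theorem integrable (hΦ : P.MeasurableWBounded Φ) {μ : Measure ℝ} (hμ : Integrable P.w μ) :
    Integrable Φ μ := by
  obtain ⟨hm, C, hC⟩ := hΦ
  exact (hμ.const_mul C).mono' hm.aestronglyMeasurable (ae_of_all _ fun x => hC x)

theorem of_abs_le (hΦ : P.MeasurableWBounded Φ) (hΨ : Measurable Ψ) (h : ∀ x, |Ψ x| ≤ |Φ x|) :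
    P.MeasurableWBounded Ψ := by
  obtain ⟨-, C, hC⟩ := hΦ
  exact ⟨hΨ, C, fun x => (h x).trans (hC x)⟩

theorem neg (hΦ : P.MeasurableWBounded Φ) : P.MeasurableWBounded fun x => -Φ x :=
  hΦ.of_abs_le hΦ.1.neg fun _ => (abs_neg _).le

theorem add (hΦ : P.MeasurableWBounded Φ) (hΨ : P.MeasurableWBounded Ψ) :
    P.MeasurableWBounded fun x => Φ x + Ψ x := by
  obtain ⟨hΦm, C, hC⟩ := hΦ
  obtain ⟨hΨm, D, hD⟩ := hΨ
  refine ⟨hΦm.add hΨm, C + D, fun x => ?_⟩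
  linarith [abs_add_le (Φ x) (Ψ x), hC x, hD x]

theorem sub (hΦ : P.MeasurableWBounded Φ) (hΨ : P.MeasurableWBounded Ψ) :
    P.MeasurableWBounded fun x => Φ x - Ψ x := by
  simpa only [sub_eq_add_neg] using hΦ.add hΨ.neg

theorem abs (hΦ : P.MeasurableWBounded Φ) : P.MeasurableWBounded fun x => |Φ x| :=
  hΦ.of_abs_le hΦ.1.abs fun _ => (abs_abs _).le

theorem const_mul (hΦ : P.MeasurableWBounded Φ) (a : ℝ) :
    P.MeasurableWBounded fun x => a * Φ x := by
  obtain ⟨hm, C, hC⟩ := hΦ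
  refine ⟨hm.const_mul a, |a| * C, fun x => ?_⟩
  rw [abs_mul, mul_assoc]
  exact mul_le_mul_of_nonneg_left (hC x) (abs_nonneg a)

theorem integral_sub (hΦ : P.MeasurableWBounded Φ) (hΨ : P.MeasurableWBounded Ψ) {μ : Measure ℝ}
    (hμ : Integrable P.w μ) : ∫ x, (Φ x - Ψ x) ∂μ = ∫ x, Φ x ∂μ - ∫ x, Ψ x ∂μ :=
  MeasureTheory.integral_sub (hΦ.integrable hμ) (hΨ.integrable hμ)

end MeasurableWBounded

theorem integral_sandwich {P : Bandit} {Φ₁ Φ₂ Ψ₁ Ψ₂ : ℝ → ℝ} (hΦ₁ : P.MeasurableWBounded Φ₁)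
    (hΦ₂ : P.MeasurableWBounded Φ₂) (hΨ₁ : P.MeasurableWBounded Ψ₁)
    (hΨ₂ : P.MeasurableWBounded Ψ₂) {μ : Measure ℝ} (hμ : Integrable P.w μ) {a b : ℝ}
    (h : ∀ x, a * (Φ₁ x - Φ₂ x) ≤ Ψ₁ x - Ψ₂ x ∧ Ψ₁ x - Ψ₂ x ≤ b * (Φ₁ x - Φ₂ x)) :
    a * (∫ x, Φ₁ x ∂μ - ∫ x, Φ₂ x ∂μ) ≤ ∫ x, Ψ₁ x ∂μ - ∫ x, Ψ₂ x ∂μ ∧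
      ∫ x, Ψ₁ x ∂μ - ∫ x, Ψ₂ x ∂μ ≤ b * (∫ x, Φ₁ x ∂μ - ∫ x, Φ₂ x ∂μ) := by
  have hΦ := hΦ₁.sub hΦ₂
  have hΨ := hΨ₁.sub hΨ₂
  rw [← hΦ₁.integral_sub hΦ₂ hμ, ← hΨ₁.integral_sub hΨ₂ hμ, ← integral_const_mul,
    ← integral_const_mul]
  exact ⟨integral_mono ((hΦ.const_mul a).integrable hμ) (hΨ.integrable hμ) fun x => (h x).1,
    integral_mono (hΨ.integrable hμ) ((hΦ.const_mul b).integrable hμ) fun x => (h x).2⟩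

variable (P : Bandit)

theorem F_measurableWBounded (z : EReal) : P.MeasurableWBounded fun x => P.F x z :=
  ⟨P.hF_meas z, P.hF_bdd z⟩

theorem G_measurableWBounded (z : EReal) : P.MeasurableWBounded fun x => P.G x z :=
  ⟨P.hG_meas z, P.hG_bdd z⟩

theorem Fm_measurableWBounded (z : EReal) : P.MeasurableWBounded fun x => P.Fm x z :=
  ⟨P.hFm_meas z, P.hFm_bdd z⟩

theorem Gm_measurableWBounded (z : EReal) : P.MeasurableWBounded fun x => P.Gm x z :=
  ⟨P.hGm_meas z, P.hGm_bdd z⟩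

theorem measurable_g (z : EReal) : Measurable fun x => P.g x z := by
  have hint : ∀ a, Measurable fun x => ∫ y, P.G y z ∂P.κ a x :=
    fun a => ((P.hG_meas z).stronglyMeasurable.integral_kernel).measurable
  exact ((P.hc_cont true).measurable.sub (P.hc_cont false).measurable).add
    (((hint true).sub (hint false)).const_mul _)

theorem le_zero_of_le_discounted {A : ℝ → Bool} {u : ℝ → ℝ} (hu : P.MeasurableWBounded u)
    (h : ∀ x, u x ≤ P.β * ∫ y, u y ∂P.κ (A x) x) (x : ℝ) : u x ≤ 0 := by
  obtain ⟨-, C, hC⟩ := id hu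
  have hC0 : 0 ≤ C :=
    nonneg_of_mul_nonneg_left ((abs_nonneg _).trans (hC 0)) (one_pos.trans_le (P.hw_one 0))
  have hγ0 : 0 ≤ P.γ := P.hβ0.trans P.hβγ
  have bound : ∀ n : ℕ, ∀ y, u y ≤ C * P.γ ^ n * P.w y := by
    intro n
    induction n with
    | zero => intro y; simpa using (le_abs_self _).trans (hC y)
    | succ n ih =>
      intro y
      have hc : 0 ≤ C * P.γ ^ n := mul_nonneg hC0 (pow_nonneg hγ0 n)
      calc u y ≤ P.β * ∫ v, u v ∂P.κ (A y) y := h y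
        _ ≤ P.β * ∫ v, C * P.γ ^ n * P.w v ∂P.κ (A y) y :=
          mul_le_mul_of_nonneg_left (integral_mono (hu.integrable (P.hw_int _ y))
            ((P.hw_int _ y).const_mul _) ih) P.hβ0
        _ = C * P.γ ^ n * (P.β * ∫ v, P.w v ∂P.κ (A y) y) := by
          rw [integral_const_mul]; ring
        _ ≤ C * P.γ ^ n * (P.γ * P.w y) := mul_le_mul_of_nonneg_left (P.hw_drift _ y) hc
        _ = C * P.γ ^ (n + 1) * P.w y := by ring
  have hlim : Tendsto (fun n : ℕ => C * P.γ ^ n * P.w x) atTop (𝓝 (C * 0 * P.w x)) :=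
    ((tendsto_pow_atTop_nhds_zero_of_lt_one hγ0 P.hγ1).const_mul C).mul_const _
  simpa using ge_of_tendsto hlim (Eventually.of_forall fun n => bound n x)

theorem le_of_eq_add_discounted {A : ℝ → Bool} {D h : ℝ → ℝ} (hD : P.MeasurableWBounded D)
    (hh : ∀ x, 0 ≤ h x) (heq : ∀ x, D x = h x + P.β * ∫ y, D y ∂P.κ (A x) x) (x : ℝ) :
    h x ≤ D x := by
  have hD0 : ∀ y, 0 ≤ D y := fun y => neg_nonpos.mp <|
    P.le_zero_of_le_discounted hD.neg (fun v => by rw [integral_neg]; linarith [heq v, hh v]) y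
  linarith [heq x, mul_nonneg P.hβ0 (integral_nonneg hD0 (μ := P.κ (A x) x))]

theorem eq_zero_of_eq_discounted {A : ℝ → Bool} {D : ℝ → ℝ} (hD : P.MeasurableWBounded D)
    (heq : ∀ x, D x = P.β * ∫ y, D y ∂P.κ (A x) x) (x : ℝ) : D x = 0 :=
  le_antisymm (P.le_zero_of_le_discounted hD (fun y => (heq y).le) x) <| neg_nonpos.mp <|
    P.le_zero_of_le_discounted hD.neg (fun y => by rw [integral_neg]; linarith [heq y]) x

/-- By dominated convergence the limit minus `Ψ` solves the homogeneous evaluation equation. -/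
theorem tendsto_of_sub_eq_add_discounted {ι : Type*} {l : Filter ι} [l.NeBot]
    [l.IsCountablyGenerated] {A : ℝ → Bool} {Φ e : ι → ℝ → ℝ} {Ψ B : ℝ → ℝ}
    (hΦ : ∀ t, Measurable (Φ t)) (hΨ : P.MeasurableWBounded Ψ) (hB : P.MeasurableWBounded B)
    (hconv : ∀ y, ∃ L, Tendsto (fun t => Φ t y) l (𝓝 L))
    (hdom : ∀ᶠ t in l, ∀ y, |Φ t y - Ψ y| ≤ B y)
    (heq : ∀ t y, Φ t y - Ψ y = e t y + P.β * ∫ v, (Φ t v - Ψ v) ∂P.κ (A y) y)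
    (he : ∀ y, ∀ᶠ t in l, e t y = 0) (y : ℝ) :
    Tendsto (fun t => Φ t y) l (𝓝 (Ψ y)) := by
  choose L hL using hconv
  have hD : P.MeasurableWBounded fun v => L v - Ψ v :=
    hB.of_abs_le ((measurable_of_tendsto_metrizable' l hΦ (tendsto_pi_nhds.mpr hL)).sub hΨ.1)
      fun v => (le_of_tendsto ((hL v).sub_const _).abs (hdom.mono fun t ht => ht v)).trans
        (le_abs_self _)
  have hfix : ∀ y, L y - Ψ y = P.β * ∫ v, (L v - Ψ v) ∂P.κ (A y) y := fun y => by
    have hint := tendsto_integral_filter_of_dominated_convergence (F := fun t v => Φ t v - Ψ v) B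
      (Eventually.of_forall fun t => ((hΦ t).sub hΨ.1).aestronglyMeasurable)
      (hdom.mono fun t ht => ae_of_all _ fun v => ht v) (hB.integrable (P.hw_int (A y) y))
      (ae_of_all _ fun v => (hL v).sub_const (Ψ v))
    refine tendsto_nhds_unique ((hL y).sub_const _) ((hint.const_mul P.β).congr' ?_)
    filter_upwards [he y] with t ht
    rw [heq t y, ht, zero_add]
  simpa [sub_eq_zero.mp (P.eq_zero_of_eq_discounted hD hfix y)] using hL y

theorem sub_eq_indicator_sub_indicator_add {ρ : ℝ → Bool → ℝ} {Φ Ψ : ℝ → ℝ} {A B : ℝ → Bool}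
    {S T : Set ℝ} (hΦ : P.MeasurableWBounded Φ) (hΨ : P.MeasurableWBounded Ψ)
    (hΦeq : ∀ x, Φ x = ρ x (A x) + P.β * ∫ y, Φ y ∂P.κ (A x) x)
    (hΨeq : ∀ x, Ψ x = ρ x (B x) + P.β * ∫ y, Ψ y ∂P.κ (B x) x)
    (hA : ∀ x, A x = true ↔ x ∈ S) (hB : ∀ x, B x = true ↔ x ∈ T) (x : ℝ) :
    Φ x - Ψ x =
      (S.indicator (fun y => ρ y true - ρ y false +
          P.β * ((∫ v, Φ v ∂P.κ true y) - ∫ v, Φ v ∂P.κ false y)) x -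
        T.indicator (fun y => ρ y true - ρ y false +
          P.β * ((∫ v, Φ v ∂P.κ true y) - ∫ v, Φ v ∂P.κ false y)) x) +
      P.β * ∫ y, (Φ y - Ψ y) ∂P.κ (B x) x := by
  classical
  rw [hΦ.integral_sub hΨ (P.hw_int _ x), hΦeq x, hΨeq x, indicator_apply, indicator_apply,
    ← hA, ← hB]
  cases A x <;> cases B x <;> simp <;> ring

theorem G_sub_G (z₁ z₂ x : ℝ) :
    P.G x z₁ - P.G x z₂ =
      ((Ioi z₁).indicator (fun y => P.g y z₁) x - (Ioi z₂).indicator (fun y => P.g y z₁) x) +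
      P.β * ∫ y, (P.G y z₁ - P.G y z₂) ∂P.κ (decide ((z₂ : EReal) < x)) x :=
  P.sub_eq_indicator_sub_indicator_add (P.G_measurableWBounded _) (P.G_measurableWBounded _)
    (P.hG_eq · _) (P.hG_eq · _) (fun _ => by simp) (fun _ => by simp) x

theorem F_sub_Fm (z₁ z₂ x : ℝ) :
    P.F x z₁ - P.Fm x z₂ =
      ((Ioi z₁).indicator (fun y => P.f y z₁) x - (Ici z₂).indicator (fun y => P.f y z₁) x) +
      P.β * ∫ y, (P.F y z₁ - P.Fm y z₂) ∂P.κ (decide ((z₂ : EReal) ≤ x)) x :=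
  P.sub_eq_indicator_sub_indicator_add (P.F_measurableWBounded _) (P.Fm_measurableWBounded _)
    (P.hF_eq · _) (P.hFm_eq · _) (fun _ => by simp) (fun _ => by simp) x

theorem G_sub_Gm (z₁ z₂ x : ℝ) :
    P.G x z₁ - P.Gm x z₂ =
      ((Ioi z₁).indicator (fun y => P.g y z₁) x - (Ici z₂).indicator (fun y => P.g y z₁) x) +
      P.β * ∫ y, (P.G y z₁ - P.Gm y z₂) ∂P.κ (decide ((z₂ : EReal) ≤ x)) x :=
  P.sub_eq_indicator_sub_indicator_add (P.G_measurableWBounded _) (P.Gm_measurableWBounded _)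
    (P.hG_eq · _) (P.hGm_eq · _) (fun _ => by simp) (fun _ => by simp) x

theorem F_sub_mul_G_sub_eq (c z₁ z₂ x : ℝ) :
    (P.F x z₁ - c * P.G x z₁) - (P.Fm x z₂ - c * P.Gm x z₂) =
      ((Ioi z₁).indicator (fun y => P.f y z₁ - c * P.g y z₁) x -
        (Ici z₂).indicator (fun y => P.f y z₁ - c * P.g y z₁) x) +
      P.β * ∫ y, ((P.F y z₁ - c * P.G y z₁) - (P.Fm y z₂ - c * P.Gm y z₂))
        ∂P.κ (decide ((z₂ : EReal) ≤ x)) x := by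
  have hF := (P.F_measurableWBounded z₁).sub (P.Fm_measurableWBounded z₂)
  have hG := (P.G_measurableWBounded z₁).sub (P.Gm_measurableWBounded z₂)
  have hint : ∫ y, ((P.F y z₁ - c * P.G y z₁) - (P.Fm y z₂ - c * P.Gm y z₂))
        ∂P.κ (decide ((z₂ : EReal) ≤ x)) x =
      (∫ y, (P.F y z₁ - P.Fm y z₂) ∂P.κ (decide ((z₂ : EReal) ≤ x)) x) -
        c * ∫ y, (P.G y z₁ - P.Gm y z₂) ∂P.κ (decide ((z₂ : EReal) ≤ x)) x := by
    rw [← integral_const_mul, ← hF.integral_sub (hG.const_mul c) (P.hw_int _ x)]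
    congr 1
    ext y
    ring
  have hind : ∀ S : Set ℝ, S.indicator (fun y => P.f y z₁ - c * P.g y z₁) x =
      S.indicator (fun y => P.f y z₁) x - c * S.indicator (fun y => P.g y z₁) x := fun S => by
    by_cases hx : x ∈ S <;> simp [hx]
  rw [hint, hind, hind]
  linear_combination P.F_sub_Fm z₁ z₂ x - c * P.G_sub_Gm z₁ z₂ x

theorem indicator_g_le_G_sub_G (h1 : P.PCLI1) {z₁ z₂ : ℝ} (hz : z₁ ≤ z₂) (x : ℝ) :
    (Ioc z₁ z₂).indicator (fun y => P.g y z₁) x ≤ P.G x z₁ - P.G x z₂ := by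
  refine P.le_of_eq_add_discounted (A := fun y => decide ((z₂ : EReal) < y))
    ((P.G_measurableWBounded _).sub (P.G_measurableWBounded _))
    (fun y => indicator_nonneg (fun y _ => (h1 y _).le) y) (fun y => ?_) x
  rw [P.G_sub_G, ← Ioi_sdiff_Ioi, indicator_sdiff (Ioi_subset_Ioi hz), Pi.sub_apply]

theorem G_antitone (h1 : P.PCLI1) (x : ℝ) : Antitone fun z : ℝ => P.G x z := fun _ _ hz =>
  sub_nonneg.mp <| (indicator_nonneg (fun y _ => (h1 y _).le) x).trans
    (P.indicator_g_le_G_sub_G h1 hz x)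

theorem indicator_g_le_G_sub_Gm (h1 : P.PCLI1) {z z₀ : ℝ} (hz : z < z₀) (x : ℝ) :
    (Ioo z z₀).indicator (fun y => P.g y z) x ≤ P.G x z - P.Gm x z₀ := by
  refine P.le_of_eq_add_discounted (A := fun y => decide ((z₀ : EReal) ≤ y))
    ((P.G_measurableWBounded _).sub (P.Gm_measurableWBounded _))
    (fun y => indicator_nonneg (fun y _ => (h1 y _).le) y) (fun y => ?_) x
  rw [P.G_sub_Gm, ← Ioi_sdiff_Ici, indicator_sdiff (Ici_subset_Ioi.mpr hz), Pi.sub_apply]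

theorem G_le_Gm (h1 : P.PCLI1) (z x : ℝ) : P.G x z ≤ P.Gm x z :=
  sub_nonpos.mp <| P.le_zero_of_le_discounted (A := fun y => decide ((z : EReal) ≤ y))
    ((P.G_measurableWBounded z).sub (P.Gm_measurableWBounded z)) (fun y => by
      rw [P.G_sub_Gm]
      linarith [indicator_le_indicator_of_subset (f := fun v => P.g v z)
        (Ioi_subset_Ici_self (a := z)) (fun v => (h1 v _).le) y]) x

theorem tendsto_G_nhdsGT (h1 : P.PCLI1) (z x : ℝ) :
    Tendsto (fun t : ℝ => P.G x t) (𝓝[>] z) (𝓝 (P.G x z)) := by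
  refine P.tendsto_of_sub_eq_add_discounted (fun t => P.hG_meas _) (P.G_measurableWBounded _)
    ((P.G_measurableWBounded z).sub (P.G_measurableWBounded (z + 1 : ℝ)))
    (fun y => ⟨_, (P.G_antitone h1 y).tendsto_nhdsGT z⟩) ?_ (fun t y => P.G_sub_G t z y)
    (fun y => (eventually_indicator_Ioi_eq z y).mono fun t ht => by rw [ht, sub_self]) x
  filter_upwards [Ioo_mem_nhdsGT (lt_add_one z)] with t ht y
  have := P.G_antitone h1 y ht.2.le
  rw [abs_of_nonpos (by linarith [P.G_antitone h1 y ht.1.le])]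
  linarith

theorem exists_isLSMeasureOfAnti_G (h1 : P.PCLI1) (x : ℝ) :
    ∃ ν, IsLSMeasureOfAnti (fun z : ℝ => P.G x z) ν := by
  let S : StieltjesFunction ℝ :=
    { toFun := fun t => -P.G x t
      mono' := fun _ _ h => neg_le_neg (P.G_antitone h1 x h)
      right_continuous' := fun t =>
        continuousWithinAt_Ioi_iff_Ici.mp (P.tendsto_G_nhdsGT h1 t x).neg }
  refine ⟨S.measure, fun z₁ z₂ _ => ?_⟩
  rw [S.measure_Ioc]
  congr 1
  change -P.G x z₂ - -P.G x z₁ = _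
  ring

theorem mpIndex_mul_le_F_sub_F (h1 : P.PCLI1) (hmono : Monotone P.mStar) (h3 : P.PCLI3) (x : ℝ)
    {z₁ z₂ : ℝ} (hz : z₁ < z₂) :
    P.mStar z₁ * (P.G x z₁ - P.G x z₂) ≤ P.F x z₁ - P.F x z₂ ∧
      P.F x z₁ - P.F x z₂ ≤ P.mStar z₂ * (P.G x z₁ - P.G x z₂) := by
  obtain ⟨ν, hν⟩ := P.exists_isLSMeasureOfAnti_G h1 x
  have hF : P.F x z₁ - P.F x z₂ = ∫ z in Ioc z₁ z₂, P.mStar z ∂ν := by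
    linarith [h3 x ν hν z₁ z₂ hz]
  rw [hF]
  exact hν.mul_le_setIntegral_Ioc hmono hz.le (P.G_antitone h1 x hz.le)

/-- The `z₀`- and `z₀⁻`-policies differ only at `z₀`, where `f = m*(z₀) g`. -/
theorem F_sub_Fm_eq (h1 : P.PCLI1) (z₀ x : ℝ) :
    P.F x z₀ - P.Fm x z₀ = P.mStar z₀ * (P.G x z₀ - P.Gm x z₀) := by
  have hD := ((P.F_measurableWBounded z₀).sub ((P.G_measurableWBounded z₀).const_mul
    (P.mStar z₀))).sub ((P.Fm_measurableWBounded z₀).sub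
      ((P.Gm_measurableWBounded z₀).const_mul (P.mStar z₀)))
  have hE := P.eq_zero_of_eq_discounted (A := fun y => decide ((z₀ : EReal) ≤ y)) hD (fun y => by
    rw [P.F_sub_mul_G_sub_eq]
    rcases lt_trichotomy y z₀ with hy | rfl | hy
    · simp [hy.not_gt, hy.not_ge]
    · simp [mStar, m, div_mul_cancel₀ _ (h1 y y).ne']
    · simp [hy, hy.le]) x
  linarith

theorem tendsto_G_nhdsLT (h1 : P.PCLI1) (z₀ x : ℝ) :
    Tendsto (fun t : ℝ => P.G x t) (𝓝[<] z₀) (𝓝 (P.Gm x z₀)) := by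
  refine P.tendsto_of_sub_eq_add_discounted (fun t => P.hG_meas _) (P.Gm_measurableWBounded _)
    (((P.G_measurableWBounded (z₀ - 1 : ℝ)).sub (P.G_measurableWBounded z₀)).add
      ((P.G_measurableWBounded z₀).sub (P.Gm_measurableWBounded z₀)).abs)
    (fun y => ⟨_, (P.G_antitone h1 y).tendsto_nhdsLT z₀⟩) ?_ (fun t y => P.G_sub_Gm t z₀ y)
    (fun y => (eventually_indicator_Ioi_eq_Ici z₀ y).mono fun t ht => by rw [ht, sub_self]) x
  filter_upwards [Ioo_mem_nhdsLT (sub_one_lt z₀)] with t ht y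
  have h₁ := P.G_antitone h1 y ht.1.le
  have h₂ := P.G_antitone h1 y ht.2.le
  have := abs_sub_le (P.G y t) (P.G y z₀) (P.Gm y z₀)
  rw [abs_of_nonneg (sub_nonneg.2 h₂)] at this
  linarith

theorem monotoneOn_F_sub_mul_G (h1 : P.PCLI1) (hmono : Monotone P.mStar) (h3 : P.PCLI3)
    (z₀ x : ℝ) : MonotoneOn (fun t : ℝ => P.F x t - P.mStar z₀ * P.G x t) (Iic z₀) := by
  intro s _ t ht hst
  rcases hst.eq_or_lt with rfl | hst
  · exact le_rfl
  have := (P.mpIndex_mul_le_F_sub_F h1 hmono h3 x hst).2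
  have := mul_le_mul_of_nonneg_right (hmono ht) (sub_nonneg.2 (P.G_antitone h1 x hst.le))
  dsimp only
  linarith

/-- `F(x,·)` need not be monotone, but `F(x,·) - m*(z₀) G(x,·)` is nondecreasing up to `z₀`, so it
has a left limit there. -/
theorem tendsto_F_nhdsLT (h1 : P.PCLI1) (hmono : Monotone P.mStar) (h3 : P.PCLI3) (z₀ x : ℝ) :
    Tendsto (fun t : ℝ => P.F x t) (𝓝[<] z₀) (𝓝 (P.Fm x z₀)) := by
  set m₀ := P.mStar z₀
  let H : ℝ → ℝ → ℝ := fun t y => P.F y t - m₀ * P.G y t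
  have hH : ∀ t, P.MeasurableWBounded (H t) :=
    fun t => (P.F_measurableWBounded _).sub ((P.G_measurableWBounded _).const_mul _)
  have hΨ : P.MeasurableWBounded fun y => P.Fm y z₀ - m₀ * P.Gm y z₀ :=
    (P.Fm_measurableWBounded _).sub ((P.Gm_measurableWBounded _).const_mul _)
  have hmon : ∀ y, MonotoneOn (fun t => H t y) (Iic z₀) :=
    fun y => P.monotoneOn_F_sub_mul_G h1 hmono h3 z₀ y
  have hHlim : Tendsto (fun t => H t x) (𝓝[<] z₀) (𝓝 (P.Fm x z₀ - m₀ * P.Gm x z₀)) := by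
    refine P.tendsto_of_sub_eq_add_discounted (A := fun y => decide ((z₀ : EReal) ≤ y))
      (e := fun t y => (Ioi t).indicator (fun v => P.f v t - m₀ * P.g v t) y -
        (Ici z₀).indicator (fun v => P.f v t - m₀ * P.g v t) y)
      (fun t => (hH t).1) hΨ (((hH z₀).sub (hH (z₀ - 1))).add ((hH z₀).sub hΨ).abs)
      (fun y => ⟨_, ((hmon y).mono Iio_subset_Iic_self).tendsto_nhdsLT ⟨H z₀ y, ?_⟩⟩) ?_
      (fun t y => P.F_sub_mul_G_sub_eq m₀ t z₀ y)
      (fun y => (eventually_indicator_Ioi_eq_Ici z₀ y).mono fun t ht => by rw [ht, sub_self]) x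
    · rintro _ ⟨t, ht, rfl⟩
      exact hmon y (mem_Iic.2 (le_of_lt ht)) (mem_Iic.2 le_rfl) (le_of_lt ht)
    · filter_upwards [Ioo_mem_nhdsLT (sub_one_lt z₀)] with t ht y
      have h₁ := hmon y (mem_Iic.2 (ht.1.le.trans ht.2.le)) (mem_Iic.2 ht.2.le) ht.1.le
      have h₂ := hmon y (mem_Iic.2 ht.2.le) (mem_Iic.2 le_rfl) ht.2.le
      dsimp only at h₁ h₂
      have := abs_sub_le (H t y) (H z₀ y) (P.Fm y z₀ - m₀ * P.Gm y z₀)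
      rw [abs_sub_comm (H t y) (H z₀ y), abs_of_nonneg (sub_nonneg.2 h₂)] at this
      linarith
  simpa [H] using hHlim.add ((P.tendsto_G_nhdsLT h1 z₀ x).const_mul m₀)

theorem mpIndex_mul_le_F_sub_Fm (h1 : P.PCLI1) (hmono : Monotone P.mStar) (h3 : P.PCLI3)
    (x : ℝ) {z z₀ : ℝ} (hz : z < z₀) :
    P.mStar z * (P.G x z - P.Gm x z₀) ≤ P.F x z - P.Fm x z₀ ∧
      P.F x z - P.Fm x z₀ ≤ P.mStar z₀ * (P.G x z - P.Gm x z₀) := by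
  have hG := (tendsto_const_nhds (x := P.G x z)).sub (P.tendsto_G_nhdsLT h1 z₀ x)
  have hF := (tendsto_const_nhds (x := P.F x z)).sub (P.tendsto_F_nhdsLT h1 hmono h3 z₀ x)
  have hsand : ∀ᶠ t : ℝ in 𝓝[<] z₀, P.mStar z * (P.G x z - P.G x t) ≤ P.F x z - P.F x t ∧
      P.F x z - P.F x t ≤ P.mStar z₀ * (P.G x z - P.G x t) := by
    filter_upwards [Ioo_mem_nhdsLT hz] with t ht
    obtain ⟨hl, hu⟩ := P.mpIndex_mul_le_F_sub_F h1 hmono h3 x ht.1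
    exact ⟨hl, hu.trans (mul_le_mul_of_nonneg_right (hmono ht.2.le)
      (sub_nonneg.2 (P.G_antitone h1 x ht.1.le)))⟩
  exact ⟨le_of_tendsto_of_tendsto (hG.const_mul _) hF (hsand.mono fun t ht => ht.1),
    le_of_tendsto_of_tendsto hF (hG.const_mul _) (hsand.mono fun t ht => ht.2)⟩

theorem mpIndex_mul_le_Fm_sub_F (h1 : P.PCLI1) (hmono : Monotone P.mStar) (h3 : P.PCLI3)
    (x : ℝ) {z₀ z : ℝ} (hz : z₀ < z) :
    P.mStar z₀ * (P.Gm x z₀ - P.G x z) ≤ P.Fm x z₀ - P.F x z ∧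
      P.Fm x z₀ - P.F x z ≤ P.mStar z * (P.Gm x z₀ - P.G x z) := by
  obtain ⟨hl, hu⟩ := P.mpIndex_mul_le_F_sub_F h1 hmono h3 x hz
  have hatom := P.F_sub_Fm_eq h1 z₀ x
  have hm := mul_le_mul_of_nonneg_right (hmono hz.le) (sub_nonneg.2 (P.G_le_Gm h1 z₀ x))
  constructor <;> linarith

variable {p : Measure ℝ}

theorem Gp_sub_Gp_pos (h1 : P.PCLI1) (hp : Integrable P.w p)
    (hsupp : ∀ s : Set ℝ, IsOpen s → s.Nonempty → 0 < p s) {z₁ z₂ : ℝ} (hz : z₁ < z₂) :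
    0 < P.Gp p z₁ - P.Gp p z₂ := by
  rw [Gp, Gp, ← (P.G_measurableWBounded _).integral_sub (P.G_measurableWBounded _) hp]
  refine integral_pos_of_indicator_Ioo_le hsupp (P.measurable_g z₁) (fun x => h1 x z₁)
    (((P.G_measurableWBounded _).sub (P.G_measurableWBounded _)).integrable hp) hz fun x => ?_
  exact (indicator_le_indicator_of_subset Ioo_subset_Ioc_self (fun y => (h1 y _).le) x).trans
    (P.indicator_g_le_G_sub_G h1 hz.le x)

theorem Gmp_lt_Gp (h1 : P.PCLI1) (hp : Integrable P.w p)
    (hsupp : ∀ s : Set ℝ, IsOpen s → s.Nonempty → 0 < p s) {z z₀ : ℝ} (hz : z < z₀) :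
    P.Gmp p z₀ < P.Gp p z := by
  rw [← sub_pos, Gp, Gmp, ← (P.G_measurableWBounded _).integral_sub (P.Gm_measurableWBounded _) hp]
  exact integral_pos_of_indicator_Ioo_le hsupp (P.measurable_g z) (fun x => h1 x z)
    (((P.G_measurableWBounded _).sub (P.Gm_measurableWBounded _)).integrable hp) hz
    (P.indicator_g_le_G_sub_Gm h1 hz)

theorem Gp_le_Gmp (h1 : P.PCLI1) (hp : Integrable P.w p) (z : ℝ) : P.Gp p z ≤ P.Gmp p z :=
  integral_mono ((P.G_measurableWBounded _).integrable hp)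
    ((P.Gm_measurableWBounded _).integrable hp) (P.G_le_Gm h1 z)

theorem Fp_sub_div_Gp_sub_mem_uIcc (h1 : P.PCLI1) (hmono : Monotone P.mStar) (h3 : P.PCLI3)
    (hp : Integrable P.w p) (hsupp : ∀ s : Set ℝ, IsOpen s → s.Nonempty → 0 < p s)
    {z z₀ : ℝ} (hz : z ≠ z₀) :
    (P.Fp p z - P.Fp p z₀) / (P.Gp p z - P.Gp p z₀) ∈ uIcc (P.mStar z) (P.mStar z₀) := by
  have hsand : ∀ {z₁ z₂ : ℝ}, z₁ < z₂ →
      P.mStar z₁ * (P.Gp p z₁ - P.Gp p z₂) ≤ P.Fp p z₁ - P.Fp p z₂ ∧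
        P.Fp p z₁ - P.Fp p z₂ ≤ P.mStar z₂ * (P.Gp p z₁ - P.Gp p z₂) := fun hz =>
    integral_sandwich (P.G_measurableWBounded _) (P.G_measurableWBounded _)
      (P.F_measurableWBounded _) (P.F_measurableWBounded _) hp
      (P.mpIndex_mul_le_F_sub_F h1 hmono h3 · hz)
  rcases hz.lt_or_gt with hz | hz
  · exact Icc_subset_uIcc (div_mem_Icc_of_mul_le (P.Gp_sub_Gp_pos h1 hp hsupp hz) (hsand hz))
  · rw [← neg_div_neg_eq, neg_sub, neg_sub]
    exact Icc_subset_uIcc' (div_mem_Icc_of_mul_le (P.Gp_sub_Gp_pos h1 hp hsupp hz) (hsand hz))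

theorem Fp_sub_Fmp_div_Gp_sub_Gmp_mem_uIcc (h1 : P.PCLI1) (hmono : Monotone P.mStar) (h3 : P.PCLI3)
    (hp : Integrable P.w p) (hsupp : ∀ s : Set ℝ, IsOpen s → s.Nonempty → 0 < p s)
    {z z₀ : ℝ} (hz : z ≠ z₀) :
    (P.Fp p z - P.Fmp p z₀) / (P.Gp p z - P.Gmp p z₀) ∈ uIcc (P.mStar z) (P.mStar z₀) := by
  rcases hz.lt_or_gt with hz | hz
  · exact Icc_subset_uIcc (div_mem_Icc_of_mul_le (sub_pos.2 (P.Gmp_lt_Gp h1 hp hsupp hz))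
      (integral_sandwich (P.G_measurableWBounded _) (P.Gm_measurableWBounded _)
        (P.F_measurableWBounded _) (P.Fm_measurableWBounded _) hp
        (P.mpIndex_mul_le_F_sub_Fm h1 hmono h3 · hz)))
  · rw [← neg_div_neg_eq, neg_sub, neg_sub]
    have hden : 0 < P.Gmp p z₀ - P.Gp p z := by
      linarith [P.Gp_le_Gmp h1 hp z₀, P.Gp_sub_Gp_pos h1 hp hsupp hz]
    exact Icc_subset_uIcc' (div_mem_Icc_of_mul_le hden
      (integral_sandwich (P.Gm_measurableWBounded _) (P.G_measurableWBounded _)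
        (P.Fm_measurableWBounded _) (P.F_measurableWBounded _) hp
        (P.mpIndex_mul_le_Fm_sub_F h1 hmono h3 · hz)))

end Bandit

/-- Under PCL-indexability and full support of `p`, the MP index is the
derivative of `F(p,·)` with respect to `G(p,·)`. -/
theorem mpIndex_as_derivative (P : Bandit) (h : P.PCLIndexable)
    (p : Measure ℝ) (hp : P.IsInitDist p)
    (hsupp : ∀ s : Set ℝ, IsOpen s → s.Nonempty → 0 < p s) (z₀ : ℝ) :
    Filter.Tendsto
      (fun z : ℝ => (P.Fp p z - P.Fp p z₀) / (P.Gp p z - P.Gp p z₀))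
      (nhdsWithin z₀ {z₀}ᶜ) (nhds (P.mStar z₀)) ∧
    Filter.Tendsto
      (fun z : ℝ => (P.Fp p z - P.Fmp p z₀) / (P.Gp p z - P.Gmp p z₀))
      (nhdsWithin z₀ {z₀}ᶜ) (nhds (P.mStar z₀)) := by
  obtain ⟨h1, ⟨hmono, hcont, -⟩, h3⟩ := h
  exact ⟨tendsto_nhdsNE_of_mem_uIcc hcont.continuousAt fun z hz =>
      P.Fp_sub_div_Gp_sub_mem_uIcc h1 hmono h3 hp.2 hsupp hz,
    tendsto_nhdsNE_of_mem_uIcc hcont.continuousAt fun z hz =>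
      P.Fp_sub_Fmp_div_Gp_sub_Gmp_mem_uIcc h1 hmono h3 hp.2 hsupp hz⟩
end
end

section
/- (Weak duality.) Assume condition (PCLI1) and that the map (y,b) ↦ g(y,b) is jointly Borel measurable. Fix a state x ∈ ℝ and a price λ ∈ ℝ. Suppose (μ, γ₀) is primal feasible: μ is a Borel measure on ℝ with ∫ w dμ < ∞, γ₀ ∈ ℝ, and (i) ∫_{(b,∞)} g(y,b) μ(dy) + γ₀ ≥ G(x,b) for every b ∈ ℝ, (ii) ∫_ℝ g(y,−∞) μ(dy) + γ₀ = G(x,−∞), (iii) γ₀ ≥ G(x,∞). Suppose (ψ, η, ξ) is dual feasible: ψ : ℝ → ℝ is bounded, continuous and nondecreasing with Lebesgue–Stieltjes measure ν_ψ, η ∈ ℝ, ξ ≥ 0, and (iv) ∫_{(−∞,y)} g(y,b) ν_ψ(db) + g(y,−∞)·η ≤ f(y,−∞) for every y ∈ ℝ, (v) ν_ψ(ℝ) + η + ξ = λ. Then ∫_ℝ f(y,−∞) μ(dy) + λ·γ₀ ≥ ∫_ℝ G(x,b) ν_ψ(db) + G(x,−∞)·η + G(x,∞)·ξ. -/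
open MeasureTheory ProbabilityTheory Filter Topology Set

noncomputable section

/-! Integrate the primal constraint (i) against `ν_ψ` and the dual constraint (iv) against `μ`.
Both double integrals are the integral of `g(y, b)` over the region `b < y` of `μ ⊗ ν_ψ`, which is
finite because `|g| ≤ 2 M / (1 - γ) · w`, `∫ w dμ < ∞` and `ν_ψ` is finite (`ψ` is bounded), so
Fubini identifies them. Adding (ii) times `η`, (iii) times `ξ ≥ 0` and using (v) gives the claim. -/

section Integrability

variable {α : Type*} [MeasurableSpace α]

lemma integrable_of_abs_le_mul {μ : Measure α} {w v : α → ℝ} (hw : Integrable w μ)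
    (hv : AEStronglyMeasurable v μ) {C : ℝ} (h : ∀ y, |v y| ≤ C * w y) : Integrable v μ :=
  (hw.const_mul C).mono' hv (ae_of_all _ h)

lemma isFiniteMeasure_of_integrable_of_one_le {μ : Measure α} {w : α → ℝ}
    (hw : Integrable w μ) (h1 : ∀ x, 1 ≤ w x) : IsFiniteMeasure μ := by
  have huniv : {x | 1 ≤ |w x|} = univ :=
    eq_univ_of_forall fun x => (h1 x).trans (le_abs_self _)
  exact ⟨by simpa [huniv] using hw.measure_norm_ge_lt_top one_pos⟩

end Integrability

lemma IsLSMeasureOfMono.isFiniteMeasure {h : ℝ → ℝ} {ν : Measure ℝ}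
    (hν : IsLSMeasureOfMono h ν) (hh : ∃ C, ∀ z, |h z| ≤ C) : IsFiniteMeasure ν := by
  obtain ⟨C, hC⟩ := hh
  have hmono : Monotone fun n : ℕ => Ioc (-(n : ℝ)) n := fun m n hmn =>
    Ioc_subset_Ioc (neg_le_neg (Nat.cast_le.mpr hmn)) (Nat.cast_le.mpr hmn)
  have hunion : ⋃ n : ℕ, Ioc (-(n : ℝ)) n = univ := by
    refine eq_univ_of_forall fun y => mem_iUnion.2 ?_
    obtain ⟨n, hn⟩ := exists_nat_gt |y|
    exact ⟨n, by linarith [neg_abs_le y], by linarith [le_abs_self y]⟩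
  refine ⟨?_⟩
  calc ν univ = ⨆ n : ℕ, ν (Ioc (-(n : ℝ)) n) := by rw [← hunion, hmono.measure_iUnion]
    _ ≤ ENNReal.ofReal (2 * C) := iSup_le fun n => by
        rw [hν _ _ (by linarith [(n.cast_nonneg : (0 : ℝ) ≤ n)])]
        exact ENNReal.ofReal_le_ofReal
          (by linarith [(abs_le.1 (hC n)).2, (abs_le.1 (hC (-n))).1])
    _ < ⊤ := ENNReal.ofReal_lt_top

section Triangle

variable {μ ν : Measure ℝ} {g : ℝ → ℝ → ℝ}

lemma integral_indicator_lt_eq_setIntegral_Ioi (b : ℝ) :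
    ∫ y, {q : ℝ × ℝ | q.2 < q.1}.indicator (Function.uncurry g) (y, b) ∂μ =
      ∫ y in Ioi b, g y b ∂μ := by
  rw [← integral_indicator measurableSet_Ioi]
  rfl

lemma integral_indicator_lt_eq_setIntegral_Iio (y : ℝ) :
    ∫ b, {q : ℝ × ℝ | q.2 < q.1}.indicator (Function.uncurry g) (y, b) ∂ν =
      ∫ b in Iio y, g y b ∂ν := by
  rw [← integral_indicator measurableSet_Iio]
  rfl

lemma MeasureTheory.Integrable.indicator_lt (hg : Integrable (Function.uncurry g) (μ.prod ν)) :
    Integrable ({q : ℝ × ℝ | q.2 < q.1}.indicator (Function.uncurry g)) (μ.prod ν) :=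
  hg.indicator (measurableSet_lt measurable_snd measurable_fst)

lemma MeasureTheory.Integrable.setIntegral_Ioi [SFinite μ] [SFinite ν]
    (hg : Integrable (Function.uncurry g) (μ.prod ν)) :
    Integrable (fun b => ∫ y in Ioi b, g y b ∂μ) ν := by
  simpa only [integral_indicator_lt_eq_setIntegral_Ioi] using hg.indicator_lt.integral_prod_right

lemma MeasureTheory.Integrable.setIntegral_Iio [SFinite μ] [SFinite ν]
    (hg : Integrable (Function.uncurry g) (μ.prod ν)) :
    Integrable (fun y => ∫ b in Iio y, g y b ∂ν) μ := by
  simpa only [integral_indicator_lt_eq_setIntegral_Iio] using hg.indicator_lt.integral_prod_left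

lemma integral_setIntegral_Ioi_eq_integral_setIntegral_Iio [SFinite μ] [SFinite ν]
    (hg : Integrable (Function.uncurry g) (μ.prod ν)) :
    ∫ b, ∫ y in Ioi b, g y b ∂μ ∂ν = ∫ y, ∫ b in Iio y, g y b ∂ν ∂μ := by
  simp only [← integral_indicator_lt_eq_setIntegral_Ioi,
    ← integral_indicator_lt_eq_setIntegral_Iio]
  exact (integral_integral_swap (f := fun y b => {q : ℝ × ℝ | q.2 < q.1}.indicator
    (Function.uncurry g) (y, b)) hg.indicator_lt).symm

end Triangle

namespace Bandit

variable (P : Bandit)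

def metricBound : ℝ := P.M / (1 - P.γ)

lemma w_pos (x : ℝ) : 0 < P.w x := one_pos.trans_le (P.hw_one x)

lemma γ_nonneg : 0 ≤ P.γ := P.hβ0.trans P.hβγ

lemma abs_c_le (x : ℝ) (a : Bool) : |P.c x a| ≤ P.M * P.w x := by
  have hc : 0 ≤ P.c x a := by
    cases a
    · exact P.hc0 x
    · exact (P.hc0 x).trans (P.hc01 x).le
  rw [abs_of_nonneg hc]
  exact P.hc_bd x a

lemma M_add_metricBound_mul_γ : P.M + P.metricBound * P.γ = P.metricBound := by
  have : 1 - P.γ ≠ 0 := by linarith [P.hγ1]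
  unfold metricBound
  field_simp
  ring

lemma M_le_metricBound : P.M ≤ P.metricBound := by
  have : 0 ≤ P.metricBound := div_nonneg P.hM.le (by linarith [P.hγ1])
  nlinarith [P.M_add_metricBound_mul_γ, P.γ_nonneg]

lemma integrable_κ_of_abs_le (a : Bool) (x : ℝ) {v : ℝ → ℝ} (hv_meas : Measurable v)
    {C : ℝ} (hv : ∀ y, |v y| ≤ C * P.w y) : Integrable v (P.κ a x) :=
  integrable_of_abs_le_mul (P.hw_int a x) hv_meas.aestronglyMeasurable hv

lemma β_mul_abs_integral_le {v : ℝ → ℝ} {C : ℝ} (hv : ∀ y, |v y| ≤ C * P.w y)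
    (a : Bool) (x : ℝ) : P.β * |∫ y, v y ∂P.κ a x| ≤ C * P.γ * P.w x := by
  have hC : 0 ≤ C := nonneg_of_mul_nonneg_left ((abs_nonneg _).trans (hv 0)) (P.w_pos 0)
  calc P.β * |∫ y, v y ∂P.κ a x| ≤ P.β * ∫ y, C * P.w y ∂P.κ a x :=
        mul_le_mul_of_nonneg_left (norm_integral_le_of_norm_le (f := v)
          ((P.hw_int a x).const_mul C) (ae_of_all _ hv)) P.hβ0
    _ = C * (P.β * ∫ y, P.w y ∂P.κ a x) := by rw [integral_const_mul]; ring
    _ ≤ C * (P.γ * P.w x) := mul_le_mul_of_nonneg_left (P.hw_drift a x) hC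
    _ = C * P.γ * P.w x := by ring

lemma abs_add_β_mul_integral_le {v : ℝ → ℝ} {C s x : ℝ}
    (hv : ∀ y, |v y| ≤ C * P.w y) (hs : |s| ≤ P.M * P.w x) (a : Bool) :
    |s + P.β * ∫ y, v y ∂P.κ a x| ≤ (P.M + C * P.γ) * P.w x := by
  have h := P.β_mul_abs_integral_le hv a x
  calc |s + P.β * ∫ y, v y ∂P.κ a x| ≤ |s| + P.β * |∫ y, v y ∂P.κ a x| := by
        rw [← abs_of_nonneg P.hβ0, ← abs_mul, abs_of_nonneg P.hβ0]
        exact abs_add_le _ _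
    _ ≤ (P.M + C * P.γ) * P.w x := by linarith

/-- The a priori `w`-bound of a fixed point only depends on `M` and `γ`: iterating the
fixed-point equation contracts any initial bound `C` to `metricBound + γ ^ k * C`. -/
lemma abs_le_metricBound_of_isFixedPt {v : ℝ → ℝ} (hv : ∃ C, ∀ x, |v x| ≤ C * P.w x)
    (heq : ∀ x, ∃ a s, |s| ≤ P.M * P.w x ∧ v x = s + P.β * ∫ y, v y ∂P.κ a x)
    (x : ℝ) :
    |v x| ≤ P.metricBound * P.w x := by
  obtain ⟨C, hC⟩ := hv
  have hiter : ∀ k : ℕ, ∀ x, |v x| ≤ (P.metricBound + P.γ ^ k * C) * P.w x := by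
    intro k
    induction k with
    | zero =>
      intro x
      have := P.M_le_metricBound
      nlinarith [hC x, P.w_pos x, P.hM]
    | succ k ih =>
      intro x
      obtain ⟨a, s, hs, hvx⟩ := heq x
      rw [hvx]
      refine (P.abs_add_β_mul_integral_le ih hs a).trans_eq ?_
      linear_combination P.w x * P.M_add_metricBound_mul_γ
  have hlim : Tendsto (fun k : ℕ => (P.metricBound + P.γ ^ k * C) * P.w x) atTop
      (𝓝 (P.metricBound * P.w x)) := by
    have := tendsto_pow_atTop_nhds_zero_of_lt_one P.γ_nonneg P.hγ1
    simpa using ((this.mul_const C).const_add P.metricBound).mul_const (P.w x)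
  exact ge_of_tendsto' hlim fun k => hiter k x

lemma abs_G_le (x : ℝ) (z : EReal) : |P.G x z| ≤ P.metricBound * P.w x :=
  P.abs_le_metricBound_of_isFixedPt (P.hG_bdd z)
    (fun x => ⟨_, _, P.abs_c_le x _, P.hG_eq x z⟩) x

lemma abs_F_le (x : ℝ) (z : EReal) : |P.F x z| ≤ P.metricBound * P.w x :=
  P.abs_le_metricBound_of_isFixedPt (P.hF_bdd z)
    (fun x => ⟨_, _, P.hr_bd x _, P.hF_eq x z⟩) x

lemma abs_marginal_le {u : ℝ → Bool → ℝ} {v : ℝ → ℝ}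
    (hu : ∀ x a, |u x a| ≤ P.M * P.w x) (hv : ∀ y, |v y| ≤ P.metricBound * P.w y)
    (x : ℝ) :
    |(u x true - u x false) + P.β * ((∫ y, v y ∂P.κ true x) - ∫ y, v y ∂P.κ false x)| ≤
      2 * P.metricBound * P.w x := by
  have h1 := P.abs_add_β_mul_integral_le hv (hu x true) true
  have h0 := P.abs_add_β_mul_integral_le hv (hu x false) false
  rw [P.M_add_metricBound_mul_γ] at h1 h0
  calc _ = |(u x true + P.β * ∫ y, v y ∂P.κ true x) -
          (u x false + P.β * ∫ y, v y ∂P.κ false x)| := by ring_nf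
    _ ≤ 2 * P.metricBound * P.w x := (abs_sub _ _).trans (by linarith)

lemma abs_g_le (x : ℝ) (z : EReal) : |P.g x z| ≤ 2 * P.metricBound * P.w x :=
  P.abs_marginal_le P.abs_c_le (fun y => P.abs_G_le y z) x

lemma abs_f_le (x : ℝ) (z : EReal) : |P.f x z| ≤ 2 * P.metricBound * P.w x :=
  P.abs_marginal_le P.hr_bd (fun y => P.abs_F_le y z) x

lemma measurable_integral_κ (a : Bool) {v : ℝ → ℝ} (hv : Measurable v) :
    Measurable fun x => ∫ y, v y ∂P.κ a x :=
  hv.stronglyMeasurable.integral_kernel.measurable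

lemma measurable_marginal {u : ℝ → Bool → ℝ} {v : ℝ → ℝ}
    (hu : ∀ a, Measurable fun x => u x a) (hv : Measurable v) :
    Measurable fun x =>
      (u x true - u x false) + P.β * ((∫ y, v y ∂P.κ true x) - ∫ y, v y ∂P.κ false x) :=
  ((hu true).sub (hu false)).add
    (((P.measurable_integral_κ true hv).sub (P.measurable_integral_κ false hv)).const_mul P.β)

lemma integrable_g {μ : Measure ℝ} (hμ : Integrable P.w μ) (z : EReal) :
    Integrable (fun y => P.g y z) μ :=
  integrable_of_abs_le_mul hμ
    (P.measurable_marginal (fun a => (P.hc_cont a).measurable) (P.hG_meas z)).aestronglyMeasurable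
    (fun y => P.abs_g_le y z)

lemma integrable_f {μ : Measure ℝ} (hμ : Integrable P.w μ) (z : EReal) :
    Integrable (fun y => P.f y z) μ :=
  integrable_of_abs_le_mul hμ
    (P.measurable_marginal (fun a => (P.hr_cont a).measurable) (P.hF_meas z)).aestronglyMeasurable
    (fun y => P.abs_f_le y z)

lemma measurable_threshold {φ : Bool → ℝ × EReal → ℝ} (hφ : ∀ a, Measurable (φ a)) :
    Measurable fun q : ℝ × EReal => φ (decide (q.2 < (q.1 : EReal))) q := by
  have hs : MeasurableSet {q : ℝ × EReal | q.2 < (q.1 : EReal)} :=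
    measurableSet_lt measurable_snd (measurable_coe_real_ereal.comp measurable_fst)
  have hφ_eq : (fun q : ℝ × EReal => φ (decide (q.2 < (q.1 : EReal))) q) =
      fun q => if q.2 < (q.1 : EReal) then φ true q else φ false q := by
    funext q
    by_cases h : q.2 < (q.1 : EReal) <;> simp [h]
  rw [hφ_eq]
  exact (hφ true).ite hs (hφ false)

lemma measurable_integral_κ_prod (a : Bool) {u : ℝ × EReal → ℝ} (hu : Measurable u) :
    Measurable fun q : ℝ × EReal => ∫ y, u (y, q.2) ∂P.κ a q.1 := by
  have := P.hκ a
  have hu' : Measurable fun p : (ℝ × EReal) × ℝ => u (p.2, p.1.2) :=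
    hu.comp (measurable_snd.prodMk (measurable_snd.comp measurable_fst))
  exact (hu'.stronglyMeasurable.integral_kernel_prod_right'
    (κ := (P.κ a).comap Prod.fst measurable_fst)).measurable

/-- `Bandit` only provides measurability of `G` in the state; in the threshold it is obtained
from this lemma, as the pointwise limit of the value iterates `Gk`. -/
lemma measurable_Gk (k : ℕ) : Measurable fun q : ℝ × EReal => P.Gk k q.1 q.2 := by
  induction k with
  | zero =>
    exact measurable_threshold (φ := fun a q => P.c q.1 a)
      fun a => (P.hc_cont a).measurable.comp measurable_fst
  | succ k ih =>
    exact measurable_threshold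
      (φ := fun a q => P.c q.1 a + P.β * ∫ y, P.Gk k y q.2 ∂P.κ a q.1)
      fun a => ((P.hc_cont a).measurable.comp measurable_fst).add
        ((P.measurable_integral_κ_prod a ih).const_mul P.β)

lemma abs_Gk_le (k : ℕ) (x : ℝ) (z : EReal) : |P.Gk k x z| ≤ P.metricBound * P.w x := by
  induction k generalizing x with
  | zero =>
    exact (P.abs_c_le x _).trans (mul_le_mul_of_nonneg_right P.M_le_metricBound (P.w_pos x).le)
  | succ k ih =>
    exact (P.abs_add_β_mul_integral_le (v := fun y => P.Gk k y z) ih (P.abs_c_le x _) _).trans_eq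
      (by rw [P.M_add_metricBound_mul_γ])

lemma abs_G_sub_Gk_le (k : ℕ) (x : ℝ) (z : EReal) :
    |P.G x z - P.Gk k x z| ≤ P.metricBound * P.γ ^ (k + 1) * P.w x := by
  induction k generalizing x with
  | zero =>
    rw [P.hG_eq x z, Bandit.Gk, add_sub_cancel_left, abs_mul, abs_of_nonneg P.hβ0]
    exact (P.β_mul_abs_integral_le (fun y => P.abs_G_le y z) _ x).trans_eq (by ring)
  | succ k ih =>
    set a := decide (z < (x : EReal))
    have hG := P.integrable_κ_of_abs_le a x (P.hG_meas z) (fun y => P.abs_G_le y z)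
    have hGk := P.integrable_κ_of_abs_le (v := fun y => P.Gk k y z) a x
      ((P.measurable_Gk k).comp (measurable_id.prodMk measurable_const))
      (fun y => P.abs_Gk_le k y z)
    have hdiff :
        P.G x z - P.Gk (k + 1) x z = P.β * ∫ y, (P.G y z - P.Gk k y z) ∂P.κ a x := by
      rw [integral_sub hG hGk, P.hG_eq x z, Bandit.Gk]
      ring
    rw [hdiff, abs_mul, abs_of_nonneg P.hβ0]
    exact (P.β_mul_abs_integral_le ih a x).trans_eq (by ring)

lemma tendsto_Gk (x : ℝ) (z : EReal) :
    Tendsto (fun k => P.Gk k x z) atTop (𝓝 (P.G x z)) := by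
  have hbound : Tendsto (fun k : ℕ => P.metricBound * P.γ ^ (k + 1) * P.w x) atTop (𝓝 0) := by
    have := (tendsto_pow_atTop_nhds_zero_of_lt_one P.γ_nonneg P.hγ1).comp
      (tendsto_add_atTop_nat 1)
    simpa using (this.const_mul P.metricBound).mul_const (P.w x)
  rw [tendsto_iff_norm_sub_tendsto_zero]
  refine squeeze_zero (fun _ => norm_nonneg _) (fun k => ?_) hbound
  rw [Real.norm_eq_abs, abs_sub_comm]
  exact P.abs_G_sub_Gk_le k x z

lemma measurable_G_right (x : ℝ) : Measurable fun z => P.G x z :=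
  measurable_of_tendsto_metrizable (fun k => (P.measurable_Gk k).comp measurable_prodMk_left)
    (tendsto_pi_nhds.2 (P.tendsto_Gk x))

lemma integrable_G_right {ν : Measure ℝ} [IsFiniteMeasure ν] (x : ℝ) :
    Integrable (fun b : ℝ => P.G x b) ν :=
  (integrable_const (P.metricBound * P.w x)).mono'
    ((P.measurable_G_right x).comp measurable_coe_real_ereal).aestronglyMeasurable
    (ae_of_all _ fun b => P.abs_G_le x b)

end Bandit

theorem weak_duality_general (P : Bandit)
    (hgj : Measurable fun q : ℝ × ℝ => P.g q.1 (q.2 : EReal))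
    (x lam : ℝ)
    (μ : Measure ℝ) (hμw : MeasureTheory.Integrable P.w μ) (γ₀ : ℝ)
    (hprimal1 : ∀ b : ℝ, P.G x b ≤ (∫ y in Set.Ioi b, P.g y b ∂μ) + γ₀)
    (hprimal2 : (∫ y, P.g y ⊥ ∂μ) + γ₀ = P.G x ⊥)
    (hprimal3 : P.G x ⊤ ≤ γ₀)
    (ψ : ℝ → ℝ) (hψb : ∃ C, ∀ z : ℝ, |ψ z| ≤ C)
    (νψ : Measure ℝ) (hνψ : IsLSMeasureOfMono ψ νψ)
    (η ξ : ℝ) (hξ : 0 ≤ ξ)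
    (hdual1 : ∀ y : ℝ, (∫ b in Set.Iio y, P.g y b ∂νψ) + P.g y ⊥ * η ≤ P.f y ⊥)
    (hdual2 : (νψ Set.univ).toReal + η + ξ = lam) :
    (∫ b, P.G x b ∂νψ) + P.G x ⊥ * η + P.G x ⊤ * ξ ≤
      (∫ y, P.f y ⊥ ∂μ) + lam * γ₀ := by
  have := isFiniteMeasure_of_integrable_of_one_le hμw P.hw_one
  have := hνψ.isFiniteMeasure hψb
  have hg : Integrable (Function.uncurry fun y b : ℝ => P.g y b) (μ.prod νψ) :=
    integrable_of_abs_le_mul (hμw.comp_fst νψ) hgj.aestronglyMeasurable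
      fun q => P.abs_g_le q.1 q.2
  have hg_bot : Integrable (fun y => P.g y ⊥ * η) μ := (P.integrable_g hμw ⊥).mul_const η
  have hprimal : ∫ b, P.G x b ∂νψ ≤
      ∫ y, ∫ b in Iio y, P.g y b ∂νψ ∂μ + (νψ univ).toReal * γ₀ := by
    rw [← integral_setIntegral_Ioi_eq_integral_setIntegral_Iio hg]
    calc ∫ b, P.G x b ∂νψ ≤ ∫ b, (∫ y in Ioi b, P.g y b ∂μ + γ₀) ∂νψ :=
          integral_mono (P.integrable_G_right x) (hg.setIntegral_Ioi.add (integrable_const γ₀))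
            hprimal1
      _ = _ := by
          rw [integral_add hg.setIntegral_Ioi (integrable_const γ₀), integral_const, smul_eq_mul,
            measureReal_def]
  have hdual : ∫ y, ∫ b in Iio y, P.g y b ∂νψ ∂μ + (∫ y, P.g y ⊥ ∂μ) * η ≤
      ∫ y, P.f y ⊥ ∂μ := by
    rw [← integral_mul_const, ← integral_add hg.setIntegral_Iio hg_bot]
    exact integral_mono (hg.setIntegral_Iio.add hg_bot) (P.integrable_f hμw ⊥) hdual1
  have hγ₀ : P.G x ⊤ * ξ ≤ γ₀ * ξ := mul_le_mul_of_nonneg_right hprimal3 hξ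
  rw [← hprimal2, ← hdual2]
  linear_combination hprimal + hdual + hγ₀

/-- **Weak duality** between the primal LP relaxation `R_λ(x)` and its dual
`D_λ(x)`: the dual objective value of any dual-feasible `(ψ, η, ξ)` is at most
the primal objective value of any primal-feasible `(μ, γ₀)`. -/
theorem weak_duality (P : Bandit) (h1 : P.PCLI1)
    (hgj : Measurable fun q : ℝ × ℝ => P.g q.1 (q.2 : EReal))
    (x lam : ℝ)
    (μ : Measure ℝ) (hμw : MeasureTheory.Integrable P.w μ) (γ₀ : ℝ)
    (hprimal1 : ∀ b : ℝ, P.G x b ≤ (∫ y in Set.Ioi b, P.g y b ∂μ) + γ₀)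
    (hprimal2 : (∫ y, P.g y ⊥ ∂μ) + γ₀ = P.G x ⊥)
    (hprimal3 : P.G x ⊤ ≤ γ₀)
    (ψ : ℝ → ℝ) (hψb : ∃ C, ∀ z : ℝ, |ψ z| ≤ C) (hψc : Continuous ψ)
    (hψm : Monotone ψ)
    (νψ : Measure ℝ) (hνψ : IsLSMeasureOfMono ψ νψ)
    (η ξ : ℝ) (hξ : 0 ≤ ξ)
    (hdual1 : ∀ y : ℝ, (∫ b in Set.Iio y, P.g y b ∂νψ) + P.g y ⊥ * η ≤ P.f y ⊥)
    (hdual2 : (νψ Set.univ).toReal + η + ξ = lam) :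
    (∫ b, P.G x b ∂νψ) + P.G x ⊥ * η + P.G x ⊤ * ξ ≤
      (∫ y, P.f y ⊥ ∂μ) + lam * γ₀ :=
  weak_duality_general P hgj x lam μ hμw γ₀ hprimal1 hprimal2 hprimal3 ψ hψb νψ hνψ η ξ hξ hdual1
    hdual2
end
end
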